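/- arXiv:2602.17200 — 2 statements merged into one kernel-verified Lean document; each statement's English description precedes it below -/
import Mathlib

section
/- Let (Ω, μ) be a probability space, let A be a fixed real d × m matrix with AᵀA positive definite, and let X : Ω → ℝ^{d×m} be a random matrix that is entrywise integrable with ∫ X dμ = 0 (entrywise) and such that ω ↦ X(ω)ᵀX(ω) is entrywise integrable. Then det( ∫ (A + X(ω))ᵀ(A + X(ω)) dμ(ω) ) ≥ det(AᵀA). -/
/-!
The cross terms `Aᵀ X` and `Xᵀ A` have mean zero, so the expected Gram matrix is `Aᵀ A + S`
with `S = E[Xᵀ X]` positive semidefinite. If `B` is the positive square root of `P = Aᵀ A`, then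
`P + S = B (1 + B⁻¹ S B⁻¹) B`, and `det (1 + T) ≥ 1` for positive semidefinite `T` because
its eigenvalues `1 + λᵢ` are all at least `1`; hence `det (P + S) ≥ det P`.
-/

open MeasureTheory Matrix

section Determinant

variable {n : Type*} [Fintype n] [DecidableEq n]

theorem Matrix.PosSemidef.one_le_det_one_add {T : Matrix n n ℝ} (hT : T.PosSemidef) :
    1 ≤ (1 + T).det := by
  have hdet : (1 + T).det = ∏ i, (1 + hT.isHermitian.eigenvalues i) := by
    conv_lhs => rw [hT.isHermitian.spectral_theorem, ← map_one (Unitary.conjStarAlgAut ℝ _ _),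
      ← map_add]
    simp [-Unitary.conjStarAlgAut_apply, ← diagonal_one, diagonal_add, det_diagonal]
  rw [hdet]
  exact Finset.one_le_prod fun i _ => le_add_of_nonneg_right (hT.eigenvalues_nonneg i)

open scoped MatrixOrder in
theorem Matrix.PosDef.det_le_det_add {P S : Matrix n n ℝ} (hP : P.PosDef) (hS : S.PosSemidef) :
    P.det ≤ (P + S).det := by
  set B := CFC.sqrt P
  have hBH : B.IsHermitian := (CFC.sqrt_nonneg P).posSemidef.isHermitian
  have hB : IsUnit B.det := (isUnit_iff_isUnit_det B).mp <|
    (CFC.isUnit_sqrt_iff P hP.posSemidef.nonneg).mpr hP.isUnit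
  have hBB : B * B = P := CFC.sqrt_mul_sqrt_self P hP.posSemidef.nonneg
  have hT : (B⁻¹ * S * B⁻¹).PosSemidef := by
    simpa only [hBH.inv.eq] using hS.conjTranspose_mul_mul_same B⁻¹
  have hsplit : P + S = B * (1 + B⁻¹ * S * B⁻¹) * B := by
    simp only [Matrix.mul_add, Matrix.add_mul, Matrix.mul_one, hBB, ← Matrix.mul_assoc,
      mul_nonsing_inv B hB, Matrix.one_mul]
    rw [Matrix.mul_assoc, nonsing_inv_mul B hB, Matrix.mul_one]
  calc P.det ≤ P.det * (1 + B⁻¹ * S * B⁻¹).det :=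
        le_mul_of_one_le_right hP.det_pos.le hT.one_le_det_one_add
    _ = (P + S).det := by rw [hsplit, det_mul, det_mul, ← hBB, det_mul]; ring

end Determinant

section EntrywiseIntegral

variable {Ω : Type*} [MeasurableSpace Ω] {μ : Measure Ω} {l d m n : Type*}
  [Fintype d] [Fintype n]

theorem integrable_const_mul_matrix_apply (B : Matrix l d ℝ) {X : Ω → Matrix d m ℝ}
    (hX : ∀ i j, Integrable (fun ω => X ω i j) μ) (i : l) (j : m) :
    Integrable (fun ω => (B * X ω) i j) μ := by
  simp only [mul_apply]
  exact integrable_finsetSum _ fun k _ => (hX k j).const_mul _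

theorem integral_const_mul_matrix_apply (B : Matrix l d ℝ) {X : Ω → Matrix d m ℝ}
    (hX : ∀ i j, Integrable (fun ω => X ω i j) μ) (i : l) (j : m) :
    ∫ ω, (B * X ω) i j ∂μ = (B * of fun i j => ∫ ω, X ω i j ∂μ) i j := by
  simp only [mul_apply, of_apply]
  rw [integral_finsetSum _ fun k _ => (hX k j).const_mul _]
  simp only [integral_const_mul]

theorem posSemidef_integral {F : Ω → Matrix n n ℝ} (hF : ∀ᵐ ω ∂μ, (F ω).PosSemidef)
    (hint : ∀ i j, Integrable (fun ω => F ω i j) μ) :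
    (of fun i j => ∫ ω, F ω i j ∂μ).PosSemidef := by
  refine .of_dotProduct_mulVec_nonneg ?_ fun x => ?_
  · ext i j
    exact integral_congr_ae (hF.mono fun ω h => h.isHermitian.apply i j)
  · have hquad : star x ⬝ᵥ (of fun i j => ∫ ω, F ω i j ∂μ) *ᵥ x
        = ∫ ω, star x ⬝ᵥ F ω *ᵥ x ∂μ := by
      simp only [dotProduct, mulVec, of_apply, Finset.mul_sum]
      rw [integral_finsetSum _ fun i _ => integrable_finsetSum _ fun j _ =>
        ((hint i j).mul_const _).const_mul _]
      refine Finset.sum_congr rfl fun i _ => ?_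
      rw [integral_finsetSum _ fun j _ => ((hint i j).mul_const _).const_mul _]
      simp only [integral_const_mul, integral_mul_const]
    rw [hquad]
    exact integral_nonneg_of_ae (hF.mono fun ω h => h.dotProduct_mulVec_nonneg x)

theorem integral_gram_add_of_integral_eq_zero [IsProbabilityMeasure μ] [Fintype m]
    (A : Matrix d m ℝ) {X : Ω → Matrix d m ℝ}
    (hXint : ∀ i j, Integrable (fun ω => X ω i j) μ)
    (hXmean : ∀ i j, ∫ ω, X ω i j ∂μ = 0)
    (hXXint : ∀ i j, Integrable (fun ω => ((X ω)ᵀ * X ω) i j) μ) :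
    (of fun i j => ∫ ω, ((A + X ω)ᵀ * (A + X ω)) i j ∂μ)
      = Aᵀ * A + of fun i j => ∫ ω, ((X ω)ᵀ * X ω) i j ∂μ := by
  have hmean : (of fun i j => ∫ ω, X ω i j ∂μ) = 0 := by ext i j; exact hXmean i j
  have hcross : ∀ i j, ∫ ω, (Aᵀ * X ω) i j ∂μ = 0 := fun i j => by
    rw [integral_const_mul_matrix_apply Aᵀ hXint, hmean, Matrix.mul_zero, Matrix.zero_apply]
  have hexpand : ∀ ω, (A + X ω)ᵀ * (A + X ω)
      = Aᵀ * A + ((Aᵀ * X ω) + ((Aᵀ * X ω)ᵀ + (X ω)ᵀ * X ω)) := fun ω => by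
    rw [transpose_mul, transpose_transpose, transpose_add, Matrix.add_mul, Matrix.mul_add,
      Matrix.mul_add, add_assoc]
  ext i j
  have hint := integrable_const_mul_matrix_apply Aᵀ hXint
  simp only [of_apply, hexpand, Matrix.add_apply, transpose_apply]
  rw [integral_add (integrable_const _) ((hint i j).fun_add ((hint j i).fun_add (hXXint i j))),
    integral_add (hint i j) ((hint j i).fun_add (hXXint i j)),
    integral_add (hint j i) (hXXint i j), hcross, hcross]
  simp

end EntrywiseIntegral

/-- **Expected Gram determinant does not decrease under a zero-mean random perturbation.**
Let `(Ω, μ)` be a probability space, `A` a fixed real `d × m` matrix with `Aᵀ A` positive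
definite, and `X : Ω → ℝ^{d×m}` a random matrix that is entrywise integrable with entrywise
mean zero, and such that `ω ↦ (X ω)ᵀ * (X ω)` is entrywise integrable. Then
`det (E[(A + X)ᵀ (A + X)]) ≥ det (Aᵀ A)`. -/
theorem det_expected_gram_ge {Ω : Type*} [MeasurableSpace Ω] (μ : Measure Ω)
    [IsProbabilityMeasure μ] {d m : ℕ}
    (A : Matrix (Fin d) (Fin m) ℝ) (hA : (Aᵀ * A).PosDef)
    (X : Ω → Matrix (Fin d) (Fin m) ℝ)
    (hXint : ∀ i j, Integrable (fun ω => X ω i j) μ)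
    (hXmean : ∀ i j, ∫ ω, X ω i j ∂μ = 0)
    (hXXint : ∀ i j, Integrable (fun ω => ((X ω)ᵀ * X ω) i j) μ) :
    (Matrix.of fun i j => ∫ ω, ((A + X ω)ᵀ * (A + X ω)) i j ∂μ).det ≥ (Aᵀ * A).det := by
  rw [ge_iff_le, integral_gram_add_of_integral_eq_zero A hXint hXmean hXXint]
  refine hA.det_le_det_add (posSemidef_integral (.of_forall fun ω => ?_) hXXint)
  simpa using posSemidef_conjTranspose_mul_self (X ω)
end

section
/- Strict determinant increase of the expected GASS Gram matrix. Let B ≥ 2, let e₁, …, e_B ∈ ℝᵈ, and let t, u ∈ ℝᵈ be orthonormal vectors. For δ = ((a₁, …, a_B), (b₁, …, b_B)) ∈ ℝ^B × ℝ^B define ẽᵢ(δ) = eᵢ + aᵢ t + bᵢ u, edge vectors vᵢ(δ) = ẽᵢ(δ) − ẽ₁(δ) for i = 2, …, B, and the Gram matrix G̃(δ) with G̃(δ)ᵢⱼ = ⟨vᵢ(δ), vⱼ(δ)⟩. Let δ be distributed as the product of i.i.d. uniform distributions on [−r₁, r₁] for the aᵢ and on [−r₂, r₂] for the bᵢ,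 all independent. If r₁² + r₂² > 0, then det( E[G̃(δ)] ) > det( G̃(0) ). -/
/-!
Write `vᵢ(δ) = vᵢ(0) + Xᵢ t + Yᵢ u`, where `Xᵢ = aᵢ - a₁` and `Yᵢ = bᵢ - b₁`. The shifts are
centred, so the cross terms `⟨vᵢ(0), ·⟩` average out, and by orthonormality of `t, u` the
expected Gram matrix is `G̃(0) + E[XᵢXⱼ] + E[YᵢYⱼ]`. Since the `aₖ` are i.i.d. with variance
`r₁²/3`, `E[XᵢXⱼ] = (r₁²/3)(δᵢⱼ + 1)`, so `E[G̃] = G̃(0) + c (I + J)` with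
`c = (r₁² + r₂²)/3 > 0`. Finally `det (A + P) ≥ det A + det P > det A` for `A ⪰ 0`, `P ≻ 0`:
writing `P = S²`, this is `det (1 + M) ≥ 1 + det M` for `M = S⁻¹ A S⁻¹ ⪰ 0`, which holds
eigenvalue by eigenvalue.
-/

open MeasureTheory

/-- The uniform probability distribution on `[-r, r]`; for `r = 0` this is the Dirac mass
at `0`. -/
noncomputable def unifIcc (r : ℝ) : Measure ℝ :=
  if r = 0 then Measure.dirac 0
  else ((2 * r).toNNReal)⁻¹ • volume.restrict (Set.Icc (-r) r)

instance (r : ℝ) : SigmaFinite (unifIcc r) := by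
  unfold unifIcc; split <;> infer_instance

/-- Product measure: `B` i.i.d. uniform shifts `aᵢ` on `[-r₁, r₁]` and `B` i.i.d. uniform
shifts `bᵢ` on `[-r₂, r₂]`, all `2B` coordinates independent. -/
noncomputable def gassMeasure (B : ℕ) (r₁ r₂ : ℝ) :
    Measure ((Fin B → ℝ) × (Fin B → ℝ)) :=
  (Measure.pi fun _ => unifIcc r₁).prod (Measure.pi fun _ => unifIcc r₂)

/-- Perturbed points `ẽᵢ(δ) = eᵢ + aᵢ • t + bᵢ • u` where `δ = (a, b)`. -/
noncomputable def gassPert {d B : ℕ} (e : Fin B → EuclideanSpace ℝ (Fin d))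
    (t u : EuclideanSpace ℝ (Fin d)) (δ : (Fin B → ℝ) × (Fin B → ℝ)) (i : Fin B) :
    EuclideanSpace ℝ (Fin d) :=
  e i + δ.1 i • t + δ.2 i • u

/-- Edge vectors `vᵢ(δ) = ẽᵢ₊₁(δ) - ẽ₁(δ)`, for `i = 2, …, B` (indexed by `Fin (B - 1)`). -/
noncomputable def gassEdge {d B : ℕ} (e : Fin B → EuclideanSpace ℝ (Fin d))
    (t u : EuclideanSpace ℝ (Fin d)) (δ : (Fin B → ℝ) × (Fin B → ℝ))
    (j : Fin (B - 1)) : EuclideanSpace ℝ (Fin d) :=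
  gassPert e t u δ ⟨j.1 + 1, by have := j.2; omega⟩ -
    gassPert e t u δ ⟨0, by have := j.2; omega⟩

/-- The `(B-1) × (B-1)` Gram matrix of the edge vectors, `G̃(δ)ᵢⱼ = ⟨vᵢ(δ), vⱼ(δ)⟩`. -/
noncomputable def gassGram {d B : ℕ} (e : Fin B → EuclideanSpace ℝ (Fin d))
    (t u : EuclideanSpace ℝ (Fin d)) (δ : (Fin B → ℝ) × (Fin B → ℝ)) :
    Matrix (Fin (B - 1)) (Fin (B - 1)) ℝ :=
  Matrix.of fun i j => inner ℝ (gassEdge e t u δ i) (gassEdge e t u δ j)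

open ProbabilityTheory

namespace Matrix

variable {n : Type*} [Fintype n] [DecidableEq n]

lemma IsHermitian.det_one_add {M : Matrix n n ℝ} (hM : M.IsHermitian) :
    (1 + M).det = ∏ i, (1 + hM.eigenvalues i) := by
  have h : 1 + M = cfc (fun x : ℝ => 1 + x) M := by
    rw [cfc_const_add 1 (fun x => x) M, cfc_id' ℝ M, Algebra.algebraMap_eq_smul_one, one_smul]
  rw [h, hM.cfc_eq]
  simp [IsHermitian.cfc, -Unitary.conjStarAlgAut_apply]

lemma PosSemidef.one_add_det_le_det_one_add [Nonempty n] {M : Matrix n n ℝ}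
    (hM : M.PosSemidef) : 1 + M.det ≤ (1 + M).det := by
  obtain ⟨i⟩ := ‹Nonempty n›
  rw [hM.1.det_one_add, hM.1.det_eq_prod_eigenvalues]
  simpa using Finset.prod_add_prod_le (g := fun _ => 1) (Finset.mem_univ i) le_rfl
    (fun j _ _ => le_add_of_nonneg_right (hM.eigenvalues_nonneg j))
    (fun j _ _ => le_add_of_nonneg_left zero_le_one) (fun _ _ => zero_le_one)
    (fun j _ => hM.eigenvalues_nonneg j)

open scoped MatrixOrder in
lemma PosSemidef.det_add_det_le_det_add [Nonempty n] {A P : Matrix n n ℝ}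
    (hA : A.PosSemidef) (hP : P.PosDef) : A.det + P.det ≤ (A + P).det := by
  set S := CFC.sqrt P
  have hS : S.PosSemidef := nonneg_iff_posSemidef.mp (CFC.sqrt_nonneg P)
  have hSS : S * S = P := CFC.sqrt_mul_sqrt_self P hP.posSemidef.nonneg
  have hSdet : S.det * S.det = P.det := by rw [← det_mul, hSS]
  have hSunit : IsUnit S.det := isUnit_iff_ne_zero.mpr fun h => by
    simp [h, hP.det_pos.ne] at hSdet
  set M := S⁻¹ * A * S⁻¹
  have hM : M.PosSemidef := by
    have := hA.mul_mul_conjTranspose_same S⁻¹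
    rwa [hS.1.inv.eq] at this
  have hSMS : A = S * M * S := by
    simp only [M, ← mul_assoc, mul_nonsing_inv _ hSunit, one_mul]
    rw [mul_assoc, nonsing_inv_mul _ hSunit, mul_one]
  have hAP : A + P = S * (1 + M) * S := by
    rw [← hSS]; nth_rewrite 1 [hSMS]; noncomm_ring
  calc A.det + P.det = P.det * (1 + M.det) := by
        rw [← hSdet]; nth_rewrite 1 [hSMS]; simp only [det_mul]; ring
    _ ≤ P.det * (1 + M).det :=
        mul_le_mul_of_nonneg_left hM.one_add_det_le_det_one_add hP.det_pos.le
    _ = (A + P).det := by rw [hAP, det_mul, det_mul, ← hSdet]; ring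

lemma posDef_one_add_allOnes : (1 + of fun _ _ : n => (1 : ℝ)).PosDef := by
  refine PosDef.one.add_posSemidef ?_
  convert posSemidef_vecMulVec_self_star (1 : n → ℝ)
  ext; simp

end Matrix

section InnerProduct

variable {Ω V : Type*} [MeasurableSpace Ω] {ν : Measure Ω} [IsProbabilityMeasure ν]
  [NormedAddCommGroup V] [InnerProductSpace ℝ V]

lemma integral_inner_add_smul_add_smul {t u : V} (ht : ‖t‖ = 1) (hu : ‖u‖ = 1)
    (htu : inner ℝ t u = (0 : ℝ)) (w w' : V) {X X' Y Y' : Ω → ℝ}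
    (hX : MemLp X 2 ν) (hX' : MemLp X' 2 ν) (hY : MemLp Y 2 ν) (hY' : MemLp Y' 2 ν)
    (hX0 : ∫ ω, X ω ∂ν = 0) (hX0' : ∫ ω, X' ω ∂ν = 0)
    (hY0 : ∫ ω, Y ω ∂ν = 0) (hY0' : ∫ ω, Y' ω ∂ν = 0) :
    ∫ ω, inner ℝ (w + X ω • t + Y ω • u) (w' + X' ω • t + Y' ω • u) ∂ν =
      inner ℝ w w' + ∫ ω, X ω * X' ω ∂ν + ∫ ω, Y ω * Y' ω ∂ν := by
  have hexpand (ω : Ω) : inner ℝ (w + X ω • t + Y ω • u) (w' + X' ω • t + Y' ω • u) =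
      inner ℝ w w' + ((inner ℝ w t * X' ω + inner ℝ w u * Y' ω) +
        (inner ℝ t w' * X ω + inner ℝ u w' * Y ω)) + (X ω * X' ω + Y ω * Y' ω) := by
    simp only [inner_add_left, inner_add_right, real_inner_smul_left, real_inner_smul_right,
      real_inner_self_eq_norm_sq, ht, hu, htu, real_inner_comm t u]
    ring
  have := hX.integrable one_le_two
  have := hX'.integrable one_le_two
  have := hY.integrable one_le_two
  have := hY'.integrable one_le_two
  have : Integrable (fun ω => X ω * X' ω) ν := hX.integrable_mul hX'
  have : Integrable (fun ω => Y ω * Y' ω) ν := hY.integrable_mul hY'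
  simp_rw [hexpand]
  rw [integral_add, integral_add, integral_add, integral_add, integral_add, integral_add]
  · simp [integral_const_mul, hX0, hX0', hY0, hY0', add_assoc]
  all_goals fun_prop

end InnerProduct

section PiMoments

variable {ι : Type*} [Fintype ι] [DecidableEq ι] {μ : Measure ℝ} [IsProbabilityMeasure μ]

lemma integral_pi_eval_mul_eval (k l : ι) :
    ∫ a : ι → ℝ, a k * a l ∂(Measure.pi fun _ => μ) =
      if k = l then ∫ x, x ^ 2 ∂μ else (∫ x, x ∂μ) ^ 2 := by
  split_ifs with hkl
  · subst hkl
    simpa [sq] using integral_comp_eval (μ := fun _ => μ) (i := k) (f := fun x : ℝ => x ^ 2)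
      (continuous_pow 2).aestronglyMeasurable
  · have hind := (iIndepFun_pi (μ := fun _ : ι => μ) (X := fun _ (x : ℝ) => x)
      fun _ => aemeasurable_id).indepFun hkl
    rw [hind.integral_fun_mul_eq_mul_integral (measurable_pi_apply k).aestronglyMeasurable
      (measurable_pi_apply l).aestronglyMeasurable]
    simp [integral_eval, sq]

lemma integral_pi_sub_mul_sub (hμ : MemLp id 2 μ) (hμ0 : ∫ x, x ∂μ = 0) {p p' q : ι}
    (hp : p ≠ q) (hp' : p' ≠ q) :
    ∫ a : ι → ℝ, (a p - a q) * (a p' - a q) ∂(Measure.pi fun _ => μ) =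
      (if p = p' then 2 else 1) * ∫ x, x ^ 2 ∂μ := by
  have hL2 (k : ι) : MemLp (fun a : ι → ℝ => a k) 2 (Measure.pi fun _ => μ) :=
    hμ.comp_measurePreserving (measurePreserving_eval _ k)
  have hint (k l : ι) : Integrable (fun a : ι → ℝ => a k * a l) (Measure.pi fun _ => μ) :=
    (hL2 k).integrable_mul (hL2 l)
  simp_rw [sub_mul, mul_sub]
  rw [integral_sub, integral_sub (hint p p') (hint p q), integral_sub (hint q p') (hint q q)]
  · simp only [integral_pi_eval_mul_eval, hμ0, hp, hp'.symm, if_true, if_false]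
    split_ifs <;> ring
  · exact (hint p p').sub (hint p q)
  · exact (hint q p').sub (hint q q)

end PiMoments

section UnifIcc

variable {r : ℝ}

lemma isProbabilityMeasure_unifIcc (hr : 0 ≤ r) : IsProbabilityMeasure (unifIcc r) := by
  rw [unifIcc]
  split_ifs with h
  · infer_instance
  · have h2r : 0 < 2 * r := by positivity
    constructor
    rw [Measure.smul_apply, Measure.restrict_apply_univ, Real.volume_Icc, ENNReal.smul_def,
      smul_eq_mul, show r - -r = 2 * r by ring, ENNReal.ofReal, ← ENNReal.coe_mul,
      inv_mul_cancel₀ (Real.toNNReal_pos.mpr h2r).ne', ENNReal.coe_one]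

lemma integrable_unifIcc {f : ℝ → ℝ} (hf : Continuous f) : Integrable f (unifIcc r) := by
  rw [unifIcc]
  split_ifs
  · exact integrable_dirac enorm_lt_top
  · exact hf.integrableOn_Icc.integrable.smul_measure ENNReal.coe_ne_top

lemma memLp_id_unifIcc : MemLp id 2 (unifIcc r) :=
  (memLp_two_iff_integrable_sq aestronglyMeasurable_id).2 (integrable_unifIcc (continuous_pow 2))

lemma integral_unifIcc (hr : 0 < r) (f : ℝ → ℝ) :
    ∫ x, f x ∂unifIcc r = (2 * r)⁻¹ * ∫ x in -r..r, f x := by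
  rw [unifIcc, if_neg hr.ne', integral_smul_nnreal_measure, NNReal.smul_def, NNReal.coe_inv,
    Real.coe_toNNReal _ (by positivity), smul_eq_mul, integral_Icc_eq_integral_Ioc,
    intervalIntegral.integral_of_le (by linarith)]

lemma integral_id_unifIcc (hr : 0 ≤ r) : ∫ x, x ∂unifIcc r = 0 := by
  rcases hr.eq_or_lt with rfl | hr
  · simp [unifIcc]
  · simp [integral_unifIcc hr]

lemma integral_sq_unifIcc (hr : 0 ≤ r) : ∫ x, x ^ 2 ∂unifIcc r = r ^ 2 / 3 := by
  rcases hr.eq_or_lt with rfl | hr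
  · simp [unifIcc]
  · rw [integral_unifIcc hr, integral_pow]
    field_simp
    ring

end UnifIcc

section Gass

variable {d B : ℕ}

def gassEdgeCoeff (a : Fin B → ℝ) (j : Fin (B - 1)) : ℝ :=
  a ⟨j.1 + 1, by have := j.2; omega⟩ - a ⟨0, by have := j.2; omega⟩

lemma gassEdge_eq (e : Fin B → EuclideanSpace ℝ (Fin d)) (t u : EuclideanSpace ℝ (Fin d))
    (δ : (Fin B → ℝ) × (Fin B → ℝ)) (j : Fin (B - 1)) :
    gassEdge e t u δ j =
      gassEdge e t u 0 j + gassEdgeCoeff δ.1 j • t + gassEdgeCoeff δ.2 j • u := by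
  simp only [gassEdge, gassPert, gassEdgeCoeff, Prod.fst_zero, Prod.snd_zero, Pi.zero_apply,
    zero_smul, add_zero]
  module

variable {μ : Measure ℝ} [IsProbabilityMeasure μ]

lemma memLp_gassEdgeCoeff (hμ : MemLp id 2 μ) (j : Fin (B - 1)) :
    MemLp (fun a => gassEdgeCoeff a j) 2 (Measure.pi fun _ => μ) :=
  (hμ.comp_measurePreserving (measurePreserving_eval _ _)).sub
    (hμ.comp_measurePreserving (measurePreserving_eval _ _))

lemma integral_gassEdgeCoeff (hμ : MemLp id 2 μ) (hμ0 : ∫ x, x ∂μ = 0) (j : Fin (B - 1)) :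
    ∫ a, gassEdgeCoeff a j ∂(Measure.pi fun _ => μ) = 0 := by
  have hint (k : Fin B) : Integrable (fun a : Fin B → ℝ => a k) (Measure.pi fun _ => μ) :=
    integrable_eval (hμ.integrable one_le_two)
  simp only [gassEdgeCoeff]
  rw [integral_sub (hint _) (hint _), integral_eval, integral_eval, hμ0, sub_zero]

lemma integral_gassEdgeCoeff_mul (hμ : MemLp id 2 μ) (hμ0 : ∫ x, x ∂μ = 0)
    (i j : Fin (B - 1)) :
    ∫ a, gassEdgeCoeff a i * gassEdgeCoeff a j ∂(Measure.pi fun _ => μ) =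
      (if i = j then 2 else 1) * ∫ x, x ^ 2 ∂μ := by
  simp only [gassEdgeCoeff]
  rw [integral_pi_sub_mul_sub hμ hμ0 (by simp [Fin.ext_iff]) (by simp [Fin.ext_iff])]
  simp [Fin.ext_iff]

variable {μ₁ μ₂ : Measure ℝ} [IsProbabilityMeasure μ₁] [IsProbabilityMeasure μ₂]

lemma integral_gassGram_apply (e : Fin B → EuclideanSpace ℝ (Fin d))
    {t u : EuclideanSpace ℝ (Fin d)} (ht : ‖t‖ = 1) (hu : ‖u‖ = 1)
    (htu : inner ℝ t u = (0 : ℝ)) (hμ₁ : MemLp id 2 μ₁) (hμ₂ : MemLp id 2 μ₂)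
    (hμ₁0 : ∫ x, x ∂μ₁ = 0) (hμ₂0 : ∫ x, x ∂μ₂ = 0) (i j : Fin (B - 1)) :
    ∫ δ, gassGram e t u δ i j
        ∂(Measure.pi fun _ : Fin B => μ₁).prod (Measure.pi fun _ : Fin B => μ₂) =
      gassGram e t u 0 i j + (if i = j then 2 else 1) * (∫ x, x ^ 2 ∂μ₁ + ∫ x, x ^ 2 ∂μ₂) := by
  have hG (δ : (Fin B → ℝ) × (Fin B → ℝ)) : gassGram e t u δ i j =
      inner ℝ (gassEdge e t u 0 i + gassEdgeCoeff δ.1 i • t + gassEdgeCoeff δ.2 i • u)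
        (gassEdge e t u 0 j + gassEdgeCoeff δ.1 j • t + gassEdgeCoeff δ.2 j • u) := by
    rw [gassGram, Matrix.of_apply, gassEdge_eq e t u δ i, gassEdge_eq e t u δ j]
  have hfst (f : (Fin B → ℝ) → ℝ) :
      ∫ δ, f δ.1 ∂(Measure.pi fun _ : Fin B => μ₁).prod (Measure.pi fun _ : Fin B => μ₂) =
        ∫ a, f a ∂(Measure.pi fun _ => μ₁) := by simp [integral_fun_fst]
  have hsnd (f : (Fin B → ℝ) → ℝ) :
      ∫ δ, f δ.2 ∂(Measure.pi fun _ : Fin B => μ₁).prod (Measure.pi fun _ : Fin B => μ₂) =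
        ∫ a, f a ∂(Measure.pi fun _ => μ₂) := by simp [integral_fun_snd]
  rw [funext hG, integral_inner_add_smul_add_smul ht hu htu _ _
    ((memLp_gassEdgeCoeff hμ₁ i).comp_fst _) ((memLp_gassEdgeCoeff hμ₁ j).comp_fst _)
    ((memLp_gassEdgeCoeff hμ₂ i).comp_snd _) ((memLp_gassEdgeCoeff hμ₂ j).comp_snd _)
    (by rw [hfst (gassEdgeCoeff · i), integral_gassEdgeCoeff hμ₁ hμ₁0])
    (by rw [hfst (gassEdgeCoeff · j), integral_gassEdgeCoeff hμ₁ hμ₁0])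
    (by rw [hsnd (gassEdgeCoeff · i), integral_gassEdgeCoeff hμ₂ hμ₂0])
    (by rw [hsnd (gassEdgeCoeff · j), integral_gassEdgeCoeff hμ₂ hμ₂0]),
    hfst (fun a => gassEdgeCoeff a i * gassEdgeCoeff a j),
    hsnd (fun a => gassEdgeCoeff a i * gassEdgeCoeff a j),
    integral_gassEdgeCoeff_mul hμ₁ hμ₁0, integral_gassEdgeCoeff_mul hμ₂ hμ₂0]
  rw [gassGram, Matrix.of_apply]
  ring

end Gass

/-- **Strict determinant increase of the expected GASS Gram matrix.** For `B ≥ 2` points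
`e₁, …, e_B ∈ ℝᵈ` perturbed along two orthonormal directions `t, u` by independent uniform
shifts on `[-r₁, r₁]` and `[-r₂, r₂]`, if `r₁² + r₂² > 0` then the determinant of the
entrywise expected Gram matrix strictly exceeds the unperturbed Gram determinant:
`det (E[G̃(δ)]) > det (G̃(0))`. -/
theorem gass_expected_gram_det_gt {d B : ℕ} (hB : 2 ≤ B)
    (e : Fin B → EuclideanSpace ℝ (Fin d)) (t u : EuclideanSpace ℝ (Fin d))
    (ht : ‖t‖ = 1) (hu : ‖u‖ = 1) (htu : inner ℝ t u = (0 : ℝ))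
    {r₁ r₂ : ℝ} (hr₁ : 0 ≤ r₁) (hr₂ : 0 ≤ r₂) (hr : 0 < r₁ ^ 2 + r₂ ^ 2) :
    (Matrix.of fun i j => ∫ δ, gassGram e t u δ i j ∂(gassMeasure B r₁ r₂)).det >
      (gassGram e t u 0).det := by
  have := isProbabilityMeasure_unifIcc hr₁
  have := isProbabilityMeasure_unifIcc hr₂
  have : Nonempty (Fin (B - 1)) := ⟨⟨0, by omega⟩⟩
  set c := (r₁ ^ 2 + r₂ ^ 2) / 3
  have hEG : (Matrix.of fun i j => ∫ δ, gassGram e t u δ i j ∂(gassMeasure B r₁ r₂)) =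
      gassGram e t u 0 + c • (1 + Matrix.of fun _ _ => 1) := by
    ext i j
    rw [Matrix.of_apply, gassMeasure, integral_gassGram_apply e ht hu htu memLp_id_unifIcc
      memLp_id_unifIcc (integral_id_unifIcc hr₁) (integral_id_unifIcc hr₂),
      integral_sq_unifIcc hr₁, integral_sq_unifIcc hr₂]
    simp only [Matrix.add_apply, Matrix.smul_apply, Matrix.one_apply, Matrix.of_apply, c]
    split_ifs <;> ring
  have hP : (c • (1 + Matrix.of fun _ _ : Fin (B - 1) => (1 : ℝ))).PosDef :=
    Matrix.posDef_one_add_allOnes.smul (by positivity)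
  have hG0 : (gassGram e t u 0).PosSemidef := Matrix.posSemidef_gram ℝ _
  rw [hEG]
  linarith [hG0.det_add_det_le_det_add hP, hP.det_pos]
end
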